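/- For any probability measure μ supported in [−K,K] and any z in a neighborhood of 0, C^{(1)}_μ(z²) = z R_{μ_s}(z), where μ_s is the symmetrization of μ and R denotes the (analytic convention) R-transform. -/

import Mathlib

/-!
Write `G` for the Cauchy transform of `μ_s` and `w = G⁻¹(z)`. Averaging `(w - t)⁻¹` and
`(w + t)⁻¹` gives `G(w) = ∫ w / (w² - t²) dμ`, hence `M_{μ²}(w⁻²) + 1 = ∫ w² / (w² - t²) dμ = w z`
and `H^{(1)}_μ(w⁻²) = w⁻² (w z)² = z²`. Since `H^{(1)}_μ(x) = x (M_{μ²}(x) + 1)²` is strictly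
increasing on `[0, K⁻²)`, the point `x` with `H^{(1)}_μ(x) = z²` is `w⁻²`, and then
`T^{(1)}(γ) = (γ + 1)² = (w z)²` with `γ + 1, w z ≥ 0` forces `γ = w z - 1 = z (w - 1/z)`.
-/

open MeasureTheory

noncomputable def Mfun (μ : Measure ℝ) (z : ℝ) : ℝ := ∫ t, t ^ 2 * z / (1 - t ^ 2 * z) ∂μ

noncomputable def Tfun (c z : ℝ) : ℝ := (c * z + 1) * (z + 1)

noncomputable def Hfun (c : ℝ) (μ : Measure ℝ) (z : ℝ) : ℝ := z * Tfun c (Mfun μ z)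

/-- The symmetrization `μ_s` of `μ`: `μ_s(A) = (μ(A) + μ(-A))/2`. -/
noncomputable def symmetrization (μ : Measure ℝ) : Measure ℝ :=
  (2 : ENNReal)⁻¹ • μ + (2 : ENNReal)⁻¹ • Measure.map (fun t : ℝ => -t) μ

theorem Tfun_one (γ : ℝ) : Tfun 1 γ = (γ + 1) ^ 2 := by
  rw [Tfun]; ring

theorem Hfun_one (μ : Measure ℝ) (x : ℝ) : Hfun 1 μ x = x * (Mfun μ x + 1) ^ 2 := by
  rw [Hfun, Tfun_one]

section Symmetrization

variable {μ : Measure ℝ}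

theorem integral_symmetrization {f : ℝ → ℝ} (hf : Integrable f μ)
    (hf_neg : Integrable (fun t => f (-t)) μ) :
    ∫ t, f t ∂(symmetrization μ) = 2⁻¹ * ∫ t, f t ∂μ + 2⁻¹ * ∫ t, f (-t) ∂μ := by
  have hmap : Integrable f (Measure.map (fun t => -t) μ) :=
    (integrable_map_equiv (MeasurableEquiv.neg ℝ) f).mpr hf_neg
  have hmap_integral : ∫ t, f t ∂(Measure.map (fun t => -t) μ) = ∫ t, f (-t) ∂μ :=
    integral_map_equiv (MeasurableEquiv.neg ℝ) f
  rw [symmetrization, integral_add_measure (hf.smul_measure (by simp))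
      (hmap.smul_measure (by simp)), integral_smul_measure, integral_smul_measure,
    hmap_integral]
  simp

theorem ae_abs_le_of_measure_compl_Icc {K : ℝ} (h : μ (Set.Icc (-K) K)ᶜ = 0) :
    ∀ᵐ t ∂μ, |t| ≤ K :=
  (show ∀ᵐ t ∂μ, t ∈ Set.Icc (-K) K from mem_ae_iff.mpr h).mono fun _ ht => abs_le.mpr ht

theorem integrable_inv_sub_of_abs_le [IsFiniteMeasure μ] {K w : ℝ} (hμ : ∀ᵐ t ∂μ, |t| ≤ K)
    (hw : K < |w|) : Integrable (fun t => (w - t)⁻¹) μ := by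
  refine .of_bound (measurable_const.sub measurable_id).inv.aestronglyMeasurable
    (|w| - K)⁻¹ (hμ.mono fun t ht => ?_)
  have hdist : |w| - K ≤ |w - t| := by linarith [abs_sub_abs_le_abs_sub w t]
  rw [Real.norm_eq_abs, abs_inv]
  exact inv_anti₀ (by linarith) hdist

theorem integral_inv_sub_symmetrization [IsFiniteMeasure μ] {K w : ℝ}
    (hμ : ∀ᵐ t ∂μ, |t| ≤ K) (hw : K < |w|) :
    ∫ t, (w - t)⁻¹ ∂(symmetrization μ) = ∫ t, w / (w ^ 2 - t ^ 2) ∂μ := by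
  have hint := integrable_inv_sub_of_abs_le hμ hw
  have hint_neg : Integrable (fun t => (w - -t)⁻¹) μ := by
    have := (integrable_inv_sub_of_abs_le hμ (w := -w) (by rwa [abs_neg])).neg
    refine this.congr (ae_of_all _ fun t => ?_)
    rw [Pi.neg_apply, ← inv_neg]
    ring
  rw [integral_symmetrization hint hint_neg, ← integral_const_mul, ← integral_const_mul,
    ← integral_add (hint.const_mul _) (hint_neg.const_mul _)]
  refine integral_congr_ae (hμ.mono fun t ht => ?_)
  have h₁ : w - t ≠ 0 := fun h => by
    rw [sub_eq_zero.mp h] at hw; linarith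
  have h₂ : w - -t ≠ 0 := fun h => by
    rw [sub_eq_zero.mp h, abs_neg] at hw; linarith
  have h₃ : w ^ 2 - t ^ 2 ≠ 0 := by
    rw [sq_sub_sq]; exact mul_ne_zero (by simpa using h₂) h₁
  field_simp
  ring

end Symmetrization

section Mfun

variable {μ : Measure ℝ} {K x : ℝ}

theorem sq_mul_le_sq_mul {t : ℝ} (ht : |t| ≤ K) (hx₀ : 0 ≤ x) : t ^ 2 * x ≤ K ^ 2 * x :=
  mul_le_mul_of_nonneg_right (sq_le_sq' (abs_le.mp ht).1 (abs_le.mp ht).2) hx₀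

theorem one_sub_sq_mul_pos {t : ℝ} (ht : |t| ≤ K) (hx₀ : 0 ≤ x) (hx : K ^ 2 * x < 1) :
    0 < 1 - t ^ 2 * x := by
  linarith [sq_mul_le_sq_mul ht hx₀]

theorem Mfun_nonneg (hμ : ∀ᵐ t ∂μ, |t| ≤ K) (hx₀ : 0 ≤ x) (hx : K ^ 2 * x < 1) :
    0 ≤ Mfun μ x :=
  integral_nonneg_of_ae <| hμ.mono fun t ht =>
    div_nonneg (by positivity) (one_sub_sq_mul_pos ht hx₀ hx).le

theorem integrable_inv_one_sub_sq_mul [IsFiniteMeasure μ] (hμ : ∀ᵐ t ∂μ, |t| ≤ K)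
    (hx₀ : 0 ≤ x) (hx : K ^ 2 * x < 1) : Integrable (fun t => (1 - t ^ 2 * x)⁻¹) μ := by
  refine .of_bound (by fun_prop) (1 - K ^ 2 * x)⁻¹ (hμ.mono fun t ht => ?_)
  have hpos := one_sub_sq_mul_pos ht hx₀ hx
  have hK : 0 < 1 - K ^ 2 * x := by linarith
  rw [Real.norm_eq_abs, abs_of_pos (inv_pos.mpr hpos)]
  exact inv_anti₀ hK (by linarith [sq_mul_le_sq_mul ht hx₀])

theorem Mfun_add_one_eq_integral [IsProbabilityMeasure μ] (hμ : ∀ᵐ t ∂μ, |t| ≤ K) (hx₀ : 0 ≤ x)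
    (hx : K ^ 2 * x < 1) : Mfun μ x + 1 = ∫ t, (1 - t ^ 2 * x)⁻¹ ∂μ := by
  have hint := integrable_inv_one_sub_sq_mul hμ hx₀ hx
  have hsub : ∫ t, ((1 - t ^ 2 * x)⁻¹ - 1) ∂μ = Mfun μ x :=
    integral_congr_ae <| hμ.mono fun t ht => by
      have := (one_sub_sq_mul_pos ht hx₀ hx).ne'
      field_simp
      ring
  rw [← hsub, integral_sub hint (integrable_const 1)]
  simp

theorem Mfun_mono [IsProbabilityMeasure μ] (hμ : ∀ᵐ t ∂μ, |t| ≤ K) {x₁ x₂ : ℝ}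
    (hx₁ : 0 ≤ x₁) (h : x₁ ≤ x₂) (hx₂ : K ^ 2 * x₂ < 1) : Mfun μ x₁ ≤ Mfun μ x₂ := by
  have hx₁' : K ^ 2 * x₁ < 1 := by nlinarith [sq_nonneg K]
  have hx₂₀ : 0 ≤ x₂ := hx₁.trans h
  rw [← add_le_add_iff_right 1, Mfun_add_one_eq_integral hμ hx₁ hx₁',
    Mfun_add_one_eq_integral hμ hx₂₀ hx₂]
  refine integral_mono_ae (integrable_inv_one_sub_sq_mul hμ hx₁ hx₁')
    (integrable_inv_one_sub_sq_mul hμ hx₂₀ hx₂) (hμ.mono fun t ht => ?_)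
  exact inv_anti₀ (one_sub_sq_mul_pos ht hx₂₀ hx₂)
    (by linarith [mul_le_mul_of_nonneg_left h (sq_nonneg t)])

theorem mul_lt_one_of_mem_Ico_inv {a : ℝ} (hx : x ∈ Set.Ico 0 a⁻¹) : a * x < 1 := by
  have ha : 0 < a := inv_pos.mp (hx.1.trans_lt hx.2)
  exact (mul_lt_mul_of_pos_left hx.2 ha).trans_eq (mul_inv_cancel₀ ha.ne')

theorem Hfun_one_strictMonoOn [IsProbabilityMeasure μ] (hμ : ∀ᵐ t ∂μ, |t| ≤ K) :
    StrictMonoOn (Hfun 1 μ) (Set.Ico 0 (K ^ 2)⁻¹) := by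
  intro x₁ hx₁ x₂ hx₂ h
  have hM₁ : 0 ≤ Mfun μ x₁ := Mfun_nonneg hμ hx₁.1 (mul_lt_one_of_mem_Ico_inv hx₁)
  have hM : Mfun μ x₁ ≤ Mfun μ x₂ := Mfun_mono hμ hx₁.1 h.le (mul_lt_one_of_mem_Ico_inv hx₂)
  rw [Hfun_one, Hfun_one]
  calc x₁ * (Mfun μ x₁ + 1) ^ 2 ≤ x₁ * (Mfun μ x₂ + 1) ^ 2 := by gcongr; exact hx₁.1
    _ < x₂ * (Mfun μ x₂ + 1) ^ 2 := mul_lt_mul_of_pos_right h (by nlinarith)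

theorem inv_sq_mem_Ico_inv_sq {w : ℝ} (hK : 0 < K) (hw : K < |w|) :
    (w ^ 2)⁻¹ ∈ Set.Ico 0 (K ^ 2)⁻¹ :=
  ⟨by positivity, inv_strictAnti₀ (by positivity) (sq_lt_sq.mpr (by rwa [abs_of_pos hK]))⟩

theorem Mfun_inv_sq_add_one_eq [IsProbabilityMeasure μ] (hμ : ∀ᵐ t ∂μ, |t| ≤ K) (hK : 0 < K)
    {w : ℝ} (hw : K < |w|) :
    Mfun μ (w ^ 2)⁻¹ + 1 = w * ∫ t, (w - t)⁻¹ ∂(symmetrization μ) := by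
  have hKw : K ^ 2 < w ^ 2 := sq_lt_sq.mpr (by rwa [abs_of_pos hK])
  have hw₀ : w ^ 2 ≠ 0 := ((sq_nonneg K).trans_lt hKw).ne'
  have hx := inv_sq_mem_Ico_inv_sq hK hw
  rw [Mfun_add_one_eq_integral hμ hx.1 (mul_lt_one_of_mem_Ico_inv hx),
    integral_inv_sub_symmetrization hμ hw, ← integral_const_mul]
  refine integral_congr_ae (hμ.mono fun t ht => ?_)
  dsimp only
  have ht2 : t ^ 2 ≤ K ^ 2 := sq_le_sq' (abs_le.mp ht).1 (abs_le.mp ht).2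
  have hne : w ^ 2 - t ^ 2 ≠ 0 := by linarith
  rw [show 1 - t ^ 2 * (w ^ 2)⁻¹ = (w ^ 2 - t ^ 2) / w ^ 2 by
      rw [sub_div, div_self hw₀, div_eq_mul_inv], inv_div]
  field_simp

end Mfun

/-- For `μ` a probability measure supported in `[-K,K]` and `z` in a
neighborhood of `0`, `C^{(1)}_μ(z²) = z R_{μ_s}(z)`, where `μ_s` is the
symmetrization of `μ` and `R_ν(z) = G_ν⁻¹(z) - 1/z` is the (analytic) R-transform,
`G_ν(w) = ∫ (w - t)⁻¹ dν(t)` being the Cauchy transform and `Ginv` its local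
inverse near `0` (characterized by `G_{μ_s}(Ginv z) = z` with `|Ginv z| > K`).
Here `C^{(1)}_μ(z²)` is expressed as the γ satisfying `T^{(1)}(γ) = z²/x`,
`γ ≥ -1`, with `H^{(1)}_μ(x) = z²`, `x ∈ [0, K⁻²)`. -/
theorem stmt14 (K : ℝ) (hK : 0 < K) (μ : Measure ℝ) [IsProbabilityMeasure μ]
    (hsupp : μ (Set.Icc (-K) K)ᶜ = 0)
    (Ginv : ℝ → ℝ) (δ : ℝ) (hδ : 0 < δ)
    (hGinv : ∀ z : ℝ, 0 < |z| → |z| < δ →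
      K < |Ginv z| ∧ (∫ t, (Ginv z - t)⁻¹ ∂(symmetrization μ)) = z) :
    ∃ ε > 0, ∀ z : ℝ, 0 < |z| → |z| < ε →
      ∀ x ∈ Set.Ico (0 : ℝ) (K ^ 2)⁻¹, Hfun 1 μ x = z ^ 2 →
        ∀ γ : ℝ, -1 ≤ γ → Tfun 1 γ = z ^ 2 / x →
          γ = z * (Ginv z - 1 / z) := by
  have hμ := ae_abs_le_of_measure_compl_Icc hsupp
  refine ⟨δ, hδ, fun z hz₀ hzδ x hx hHx γ hγ hTγ => ?_⟩
  obtain ⟨hw, hG⟩ := hGinv z hz₀ hzδ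
  set w := Ginv z
  have hz : z ≠ 0 := abs_pos.mp hz₀
  have hw₀ : w ≠ 0 := abs_pos.mp (hK.trans hw)
  have hw_mem := inv_sq_mem_Ico_inv_sq hK hw
  have hM : Mfun μ (w ^ 2)⁻¹ + 1 = w * z := by rw [Mfun_inv_sq_add_one_eq hμ hK hw, hG]
  have hwz : 1 ≤ w * z :=
    hM ▸ le_add_of_nonneg_left (Mfun_nonneg hμ hw_mem.1 (mul_lt_one_of_mem_Ico_inv hw_mem))
  have hx_eq : x = (w ^ 2)⁻¹ := (Hfun_one_strictMonoOn hμ).injOn hx hw_mem <| by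
    rw [hHx, Hfun_one, hM]; field_simp
  have hγw : γ + 1 = w * z := by
    refine (sq_eq_sq₀ (by linarith) (by linarith)).mp ?_
    rw [← Tfun_one, hTγ, hx_eq]; field_simp
  rw [mul_sub, mul_one_div_cancel hz]; linarith
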